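/- Let $A = \begin{pmatrix} A_1 & 0 \\ A_3 & a \end{pmatrix}$ be a real block lower-triangular matrix with $a \in \mathbb{R}$, $|a| < 1$, and suppose there is a symmetric $P_1 \succ 0$ with $A_1^\top P_1 A_1 - P_1 \prec 0$. Then there exists $p > 0$ such that, with $P = \operatorname{diag}(P_1, p)$, one has $A^\top P A - P \prec 0$. -/

import Mathlib

/-!
Write `x = (x₁, t)`, `s = A₃ x₁` and `q = x₁ᵀ (P₁ - A₁ᵀ P₁ A₁) x₁`. The quadratic form of
`P - Aᵀ P A` at `x` is `q + p (t² - (s + a t)²)`. Cauchy–Schwarz for the inner product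
`P₁ - A₁ᵀ P₁ A₁` bounds `s² ≤ β q`, and `(1 - a²)(t² - (s + a t)²) + s²` is a perfect square, so
every `p > 0` with `p β < 1 - a²` works.
-/

open Matrix

namespace Matrix

variable {ι : Type*} [Fintype ι]

lemma IsSymm.dotProduct_mulVec_comm {Q : Matrix ι ι ℝ} (hQ : Q.IsSymm) (x y : ι → ℝ) :
    x ⬝ᵥ Q *ᵥ y = y ⬝ᵥ Q *ᵥ x := by
  rw [dotProduct_mulVec, ← mulVec_transpose, hQ.eq, dotProduct_comm]

lemma PosSemidef.sq_dotProduct_mulVec_le {Q : Matrix ι ι ℝ} (hQ : Q.PosSemidef) (x y : ι → ℝ) :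
    (y ⬝ᵥ Q *ᵥ x) ^ 2 ≤ (y ⬝ᵥ Q *ᵥ y) * (x ⬝ᵥ Q *ᵥ x) := by
  have hsymm : Q.IsSymm := isHermitian_iff_isSymm.mp hQ.isHermitian
  have hdisc := discrim_le_zero (a := x ⬝ᵥ Q *ᵥ x) (b := 2 * (y ⬝ᵥ Q *ᵥ x)) (c := y ⬝ᵥ Q *ᵥ y)
    fun r => by
      have h := hQ.dotProduct_mulVec_nonneg (y + r • x)
      simp only [star_trivial, mulVec_add, mulVec_smul, add_dotProduct, dotProduct_add,
        smul_dotProduct, dotProduct_smul, smul_eq_mul, hsymm.dotProduct_mulVec_comm x y] at h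
      linarith
  rw [discrim] at hdisc
  linarith

lemma PosDef.exists_sq_dotProduct_le {Q : Matrix ι ι ℝ} (hQ : Q.PosDef) (v : ι → ℝ) :
    ∃ β, 0 ≤ β ∧ ∀ x, (v ⬝ᵥ x) ^ 2 ≤ β * (x ⬝ᵥ Q *ᵥ x) := by
  classical
  set y := Q⁻¹ *ᵥ v
  have hQy : Q *ᵥ y = v := by
    rw [mulVec_mulVec, mul_nonsing_inv _ ((isUnit_iff_isUnit_det Q).mp hQ.isUnit), one_mulVec]
  have hsymm : Q.IsSymm := isHermitian_iff_isSymm.mp hQ.isHermitian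
  refine ⟨y ⬝ᵥ Q *ᵥ y, by simpa using hQ.posSemidef.dotProduct_mulVec_nonneg y, fun x => ?_⟩
  have h := hQ.posSemidef.sq_dotProduct_mulVec_le x y
  rw [hsymm.dotProduct_mulVec_comm y x, hQy, dotProduct_comm] at h
  rwa [hQy]

lemma dotProduct_transpose_mul_mul_mulVec {κ R : Type*} [Fintype κ] [CommSemiring R]
    (A : Matrix κ ι R) (P : Matrix κ κ R) (x : ι → R) :
    x ⬝ᵥ (Aᵀ * P * A) *ᵥ x = (A *ᵥ x) ⬝ᵥ P *ᵥ (A *ᵥ x) := by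
  rw [← mulVec_mulVec, ← mulVec_mulVec, dotProduct_mulVec, vecMul_transpose]

lemma sumElim_dotProduct_sub_transpose_mul_mul_fromBlocks_mulVec {κ R : Type*} [Fintype κ]
    [CommRing R] (A₁ P₁ : Matrix ι ι R) (A₃ : Matrix κ ι R) (D P₂ : Matrix κ κ R)
    (x₁ : ι → R) (x₂ : κ → R) :
    (x₁ ⊕ᵥ x₂) ⬝ᵥ (fromBlocks P₁ 0 0 P₂ - (fromBlocks A₁ 0 A₃ D)ᵀ * fromBlocks P₁ 0 0 P₂ *
        fromBlocks A₁ 0 A₃ D) *ᵥ (x₁ ⊕ᵥ x₂) =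
      x₁ ⬝ᵥ (P₁ - A₁ᵀ * P₁ * A₁) *ᵥ x₁ +
        (x₂ ⬝ᵥ P₂ *ᵥ x₂ - (A₃ *ᵥ x₁ + D *ᵥ x₂) ⬝ᵥ P₂ *ᵥ (A₃ *ᵥ x₁ + D *ᵥ x₂)) := by
  simp only [sub_mulVec, dotProduct_sub, dotProduct_transpose_mul_mul_mulVec, fromBlocks_mulVec,
    Sum.elim_comp_inl, Sum.elim_comp_inr, zero_mulVec, add_zero, zero_add,
    sumElim_dotProduct_sumElim]
  ring

end Matrix

lemma add_mul_sq_sub_sq_pos {a p β q s t : ℝ} (ha : a ^ 2 < 1) (hp : 0 < p)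
    (hpβ : p * β < 1 - a ^ 2) (hq : 0 ≤ q) (hs : s ^ 2 ≤ β * q) (hqt : 0 < q ∨ t ≠ 0) :
    0 < q + p * (t ^ 2 - (s + a * t) ^ 2) := by
  replace ha : 0 < 1 - a ^ 2 := sub_pos.mpr ha
  have hsquare :
      (1 - a ^ 2) * (t ^ 2 - (s + a * t) ^ 2) + s ^ 2 = ((1 - a ^ 2) * t - a * s) ^ 2 := by
    ring
  suffices 0 < (1 - a ^ 2) * (q + p * (t ^ 2 - (s + a * t) ^ 2)) from
    pos_of_mul_pos_right this ha.le
  rcases hq.lt_or_eq with hq | rfl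
  · nlinarith [sq_nonneg ((1 - a ^ 2) * t - a * s)]
  · obtain rfl : s = 0 := by nlinarith [sq_nonneg s]
    have ht : 0 < t ^ 2 := pow_two_pos_of_ne_zero (hqt.resolve_left (lt_irrefl 0))
    nlinarith [mul_pos (mul_pos hp ha) (mul_pos ha ht)]

theorem stmt6 {n : ℕ}
    (A1 : Matrix (Fin n) (Fin n) ℝ) (A3 : Matrix (Fin 1) (Fin n) ℝ) (a : ℝ)
    (ha : |a| < 1)
    (P1 : Matrix (Fin n) (Fin n) ℝ) (hP1 : P1.PosDef)
    (hLyap : (-(A1ᵀ * P1 * A1 - P1)).PosDef) :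
    ∃ p : ℝ, 0 < p ∧
      (let A : Matrix (Fin n ⊕ Fin 1) (Fin n ⊕ Fin 1) ℝ :=
        Matrix.fromBlocks A1 0 A3 (a • (1 : Matrix (Fin 1) (Fin 1) ℝ));
      let P : Matrix (Fin n ⊕ Fin 1) (Fin n ⊕ Fin 1) ℝ :=
        Matrix.fromBlocks P1 0 0 (p • (1 : Matrix (Fin 1) (Fin 1) ℝ));
      (-(Aᵀ * P * A - P)).PosDef) := by
  rw [← sq_lt_one_iff_abs_lt_one] at ha
  rw [neg_sub] at hLyap
  obtain ⟨β, hβ, hA3⟩ := hLyap.exists_sq_dotProduct_le (A3 0)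
  set p := (1 - a ^ 2) / (β + 1)
  have hp : 0 < p := div_pos (sub_pos.mpr ha) (by linarith)
  have hpβ : p * β < 1 - a ^ 2 := by
    rw [div_mul_eq_mul_div, div_lt_iff₀ (by linarith)]
    nlinarith
  refine ⟨p, hp, ?_⟩
  intro A P
  have hP : P.IsHermitian := hP1.isHermitian.fromBlocks (by simp) (by simp)
  have hAPA : (Aᵀ * P * A).IsHermitian := by
    simpa using isHermitian_conjTranspose_mul_mul A hP
  refine posDef_iff_dotProduct_mulVec.mpr ⟨(hAPA.sub hP).neg, fun x hx => ?_⟩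
  obtain ⟨x₁, x₂, rfl⟩ : ∃ x₁ x₂, x = x₁ ⊕ᵥ x₂ := ⟨_, _, (Sum.elim_comp_inl_inr x).symm⟩
  rw [star_trivial, neg_sub, sumElim_dotProduct_sub_transpose_mul_mul_fromBlocks_mulVec]
  have hq := hLyap.posSemidef.dotProduct_mulVec_nonneg x₁
  rw [star_trivial] at hq
  have hqt : 0 < x₁ ⬝ᵥ (P1 - A1ᵀ * P1 * A1) *ᵥ x₁ ∨ x₂ 0 ≠ 0 := by
    rcases eq_or_ne x₁ 0 with rfl | hx₁
    · refine .inr fun h => hx ?_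
      ext (i | i)
      · rfl
      · simp [Fin.fin_one_eq_zero i, h]
    · simpa using .inl (hLyap.dotProduct_mulVec_pos hx₁)
  refine (add_mul_sq_sub_sq_pos ha hp hpβ hq (hA3 x₁) hqt).trans_eq ?_
  congr 1
  simp only [dotProduct, Finset.univ_unique, Fin.default_eq_zero, mulVec, Matrix.smul_apply,
    smul_eq_mul, Finset.sum_singleton, one_apply_eq, mul_one, Pi.add_apply]
  ring
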